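/- arXiv:2605.23835 — 2 statements merged into one kernel-verified Lean document; each statement's English description precedes it below -/
import Mathlib

section
/- Let 0 < θ < 1, σ > 0, and let ξ : [1/2, 1] → ℝ satisfy ξ(t) ≥ ξ(1/2) ≥ 1 for all t ∈ [1/2,1], and suppose ξ(k) ≤ c₀ (h−k)^{−σ} ξ(h)^θ for all 1/2 ≤ k < h ≤ 1, for some constant c₀ > 0. Let 1 < b ≤ 2 be such that 1 − bθ > 0. Then there exists a constant c₁ > 1, independent of θ, b, σ, and ξ, such that ξ(1/2) ≤ c₁^{σb/((1−bθ)(b−1))} · c₀^{1/(1−bθ)}. -/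
/-!
Along the levels `tₙ = 1 - 1/(2bⁿ)`, which increase to `1` with gaps `(b - 1)/(2bⁿ⁺¹)`, the
hypothesis becomes, after taking logarithms, a linear recursion `xₙ ≤ uₙ + θ xₙ₊₁` for
`xₙ = log ξ(tₙ)`, with `uₙ = log c₀ + σ log (2b/(b - 1)) + nσ log b`. Iterating it, and closing each
truncation by one jump from `tₙ` straight to `1` (so that no bound on `ξ` below `1` is needed),
gives `log ξ(1/2) ≤ ∑ θⁿ uₙ`. Since `bθ < 1`, `θ/(1 - θ) ≤ 1/(b - 1)`, so by `log x ≤ x - 1` the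
sum is at most `(log c₀ + 2σb/(b - 1))/(1 - θ)`; as `log ξ(1/2) ≥ 0`, the denominator may be
lowered to `1 - bθ`, which is the claim with `c₁ = e²`.
-/

open Real Filter Topology Finset

theorem le_of_le_add_mul_succ {θ S M : ℝ} {x u : ℕ → ℝ} (hθ0 : 0 ≤ θ) (hθ1 : θ < 1)
    (hu : HasSum (fun n ↦ θ ^ n * u n) S) (hstep : ∀ n, x n ≤ u n + θ * x (n + 1))
    (hlast : ∀ n, x n ≤ u n + θ * M) : x 0 ≤ S := by
  have partial_le : ∀ N, x 0 ≤ ∑ n ∈ range N, θ ^ n * u n + θ ^ N * x N := by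
    intro N
    induction N with
    | zero => simp
    | succ N ih =>
      calc x 0 ≤ ∑ n ∈ range N, θ ^ n * u n + θ ^ N * (u N + θ * x (N + 1)) := by
            grw [ih, hstep N]
        _ = _ := by rw [sum_range_succ]; ring
  have closed_le : ∀ N, x 0 ≤ ∑ n ∈ range (N + 1), θ ^ n * u n + θ ^ (N + 1) * M := by
    intro N
    calc x 0 ≤ ∑ n ∈ range N, θ ^ n * u n + θ ^ N * (u N + θ * M) := by
          grw [partial_le N, hlast N]
      _ = _ := by rw [sum_range_succ]; ring
  have hlim : Tendsto (fun N ↦ ∑ n ∈ range (N + 1), θ ^ n * u n + θ ^ (N + 1) * M) atTop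
      (𝓝 (S + 0 * M)) :=
    (hu.tendsto_sum_nat.add
      ((tendsto_pow_atTop_nhds_zero_of_lt_one hθ0 hθ1).mul_const M)).comp
      (tendsto_add_atTop_nat 1)
  exact ge_of_tendsto' (by simpa using hlim) closed_le

theorem hasSum_pow_mul_add_mul {θ : ℝ} (hθ : |θ| < 1) (a d : ℝ) :
    HasSum (fun n : ℕ ↦ θ ^ n * (a + n * d)) ((a + d * θ / (1 - θ)) / (1 - θ)) := by
  have hθ1 : 1 - θ ≠ 0 := by linarith [le_abs_self θ]
  have hterm : (fun n : ℕ ↦ θ ^ n * (a + n * d)) = fun n : ℕ ↦ a * θ ^ n + d * (n * θ ^ n) := by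
    ext n; ring
  have hsum : (a + d * θ / (1 - θ)) / (1 - θ) = a * (1 - θ)⁻¹ + d * (θ / (1 - θ) ^ 2) := by
    field_simp
  rw [hterm, hsum]
  exact ((hasSum_geometric_of_abs_lt_one hθ).mul_left a).add
    ((hasSum_coe_mul_geometric_of_norm_lt_one hθ).mul_left d)

theorem log_le_of_le_mul_rpow_neg {c d y z σ θ : ℝ} (hc : 0 < c) (hd : 0 < d) (hy : 0 < y)
    (hz : 0 < z) (h : y ≤ c * d ^ (-σ) * z ^ θ) :
    log y ≤ log c + σ * log d⁻¹ + θ * log z := by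
  have := log_le_log hy h
  rw [log_mul (by positivity) (by positivity), log_mul hc.ne' (by positivity),
    log_rpow hd, log_rpow hz] at this
  rw [log_inv]
  linarith

noncomputable def iterationLevel (b : ℝ) (n : ℕ) : ℝ := 1 - 1 / (2 * b ^ n)

section iterationLevel

variable {b : ℝ}

theorem iterationLevel_zero (b : ℝ) : iterationLevel b 0 = 1 / 2 := by
  norm_num [iterationLevel]

theorem iterationLevel_lt_one (hb : 0 < b) (n : ℕ) : iterationLevel b n < 1 := by
  unfold iterationLevel
  have : 0 < 1 / (2 * b ^ n) := by positivity
  linarith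

theorem one_sub_iterationLevel_inv (b : ℝ) (n : ℕ) : (1 - iterationLevel b n)⁻¹ = 2 * b ^ n := by
  simp [iterationLevel]

theorem iterationLevel_succ_sub_inv (hb : 1 < b) (n : ℕ) :
    (iterationLevel b (n + 1) - iterationLevel b n)⁻¹ = 2 * b / (b - 1) * b ^ n := by
  have : b - 1 ≠ 0 := by linarith
  have : b ≠ 0 := by linarith
  have h : iterationLevel b (n + 1) - iterationLevel b n = (b - 1) / (2 * b * b ^ n) := by
    unfold iterationLevel
    field_simp
    ring
  rw [h, inv_div]
  field_simp

theorem one_half_le_iterationLevel (hb : 1 ≤ b) (n : ℕ) : 1 / 2 ≤ iterationLevel b n := by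
  have : 1 / (2 * b ^ n) ≤ 1 / 2 := by
    gcongr
    exact le_mul_of_one_le_right zero_le_two (one_le_pow₀ hb)
  unfold iterationLevel
  linarith

theorem iterationLevel_lt_succ (hb : 1 < b) (n : ℕ) :
    iterationLevel b n < iterationLevel b (n + 1) := by
  have : 0 < b := by linarith
  unfold iterationLevel
  gcongr
  exact n.lt_succ_self

end iterationLevel

theorem log_le_of_le_mul_sub_rpow_neg_mul_rpow {θ σ c₀ b : ℝ} {ξ : ℝ → ℝ} (hθ0 : 0 ≤ θ)
    (hθ1 : θ < 1) (hσ : 0 ≤ σ) (hc₀ : 0 < c₀) (hb : 1 < b)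
    (hξ : ∀ t, 1 / 2 ≤ t → t ≤ 1 → 0 < ξ t)
    (hiter : ∀ k h : ℝ, 1 / 2 ≤ k → k < h → h ≤ 1 → ξ k ≤ c₀ * (h - k) ^ (-σ) * ξ h ^ θ) :
    log (ξ (1 / 2)) ≤ (log c₀ + σ * log (2 * b / (b - 1)) + σ * log b * θ / (1 - θ)) / (1 - θ) := by
  have hb0 : 0 < b := by linarith
  have hb1 : 0 < b - 1 := by linarith
  have hξt : ∀ n, 0 < ξ (iterationLevel b n) := fun n ↦
    hξ _ (one_half_le_iterationLevel hb.le n) (iterationLevel_lt_one hb0 n).le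
  have hξ1 : 0 < ξ 1 := hξ 1 (by norm_num) le_rfl
  rw [← iterationLevel_zero b]
  refine le_of_le_add_mul_succ (x := fun n ↦ log (ξ (iterationLevel b n))) (M := log (ξ 1))
    hθ0 hθ1 (hasSum_pow_mul_add_mul (abs_lt.2 ⟨by linarith, hθ1⟩) _ _) (fun n ↦ ?_) (fun n ↦ ?_)
  · have := log_le_of_le_mul_rpow_neg hc₀ (sub_pos.2 (iterationLevel_lt_succ hb n)) (hξt n)
      (hξt (n + 1)) (hiter _ _ (one_half_le_iterationLevel hb.le n) (iterationLevel_lt_succ hb n)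
        (iterationLevel_lt_one hb0 (n + 1)).le)
    rw [iterationLevel_succ_sub_inv hb, log_mul (by positivity) (by positivity), log_pow] at this
    linear_combination this
  · have := log_le_of_le_mul_rpow_neg hc₀ (sub_pos.2 (iterationLevel_lt_one hb0 n)) (hξt n) hξ1
      (hiter _ _ (one_half_le_iterationLevel hb.le n) (iterationLevel_lt_one hb0 n) le_rfl)
    rw [one_sub_iterationLevel_inv, log_mul two_ne_zero (by positivity), log_pow] at this
    have h2 : log 2 ≤ log (2 * b / (b - 1)) :=
      log_le_log two_pos ((le_div_iff₀ hb1).2 (by linarith))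
    linear_combination this + σ * h2

theorem sub_one_mul_log_add_le {b θ : ℝ} (hb : 1 < b) (hθ0 : 0 ≤ θ) (hbθ : b * θ < 1) :
    (b - 1) * (log (2 * b / (b - 1)) + log b * θ / (1 - θ)) ≤ 2 * b := by
  have hb1 : 0 < b - 1 := by linarith
  have hθ1 : 0 < 1 - θ := by nlinarith
  have h1 : (b - 1) * log (2 * b / (b - 1)) ≤ b + 1 :=
    calc (b - 1) * log (2 * b / (b - 1)) ≤ (b - 1) * (2 * b / (b - 1) - 1) := by
          gcongr; exact log_le_sub_one_of_pos (by positivity)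
      _ = b + 1 := by field_simp; ring
  have h2 : (b - 1) * (log b * θ / (1 - θ)) ≤ log b :=
    calc (b - 1) * (log b * θ / (1 - θ)) = log b * ((b - 1) * θ / (1 - θ)) := by ring
      _ ≤ log b * 1 := by
          gcongr
          · exact log_nonneg hb.le
          · exact (div_le_one hθ1).2 (by linarith)
      _ = log b := mul_one _
  linarith [log_le_sub_one_of_pos (by linarith : 0 < b)]

/-- De Giorgi-type iteration lemma (Lemma 2.1 / `Lemma 64` of the paper). -/
theorem degiorgi_iteration :
    ∃ c₁ : ℝ, 1 < c₁ ∧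
      ∀ (θ σ c₀ b : ℝ) (ξ : ℝ → ℝ),
        0 < θ → θ < 1 → 0 < σ → 0 < c₀ → 1 < b → b ≤ 2 → 0 < 1 - b * θ →
        (∀ t : ℝ, 1/2 ≤ t → t ≤ 1 → ξ (1/2) ≤ ξ t) →
        1 ≤ ξ (1/2) →
        (∀ k h : ℝ, 1/2 ≤ k → k < h → h ≤ 1 →
          ξ k ≤ c₀ * (h - k) ^ (-σ) * (ξ h) ^ θ) →
        ξ (1/2) ≤ c₁ ^ (σ * b / ((1 - b * θ) * (b - 1))) * c₀ ^ (1 / (1 - b * θ)) := by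
  refine ⟨exp 2, one_lt_exp_iff.2 two_pos, ?_⟩
  intro θ σ c₀ b ξ hθ0 hθ1 hσ hc₀ hb _ hbθ hmono hξ hiter
  have hb1 : 0 < b - 1 := by linarith
  have hG := log_le_of_le_mul_sub_rpow_neg_mul_rpow hθ0.le hθ1 hσ.le hc₀ hb
    (fun t h₁ h₂ ↦ zero_lt_one.trans_le (hξ.trans (hmono t h₁ h₂))) hiter
  have hL := sub_one_mul_log_add_le hb hθ0.le (by linarith)
  have key : log (ξ (1 / 2)) ≤ (log c₀ + σ * (2 * b / (b - 1))) / (1 - b * θ) := by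
    rw [le_div_iff₀ hbθ]
    calc log (ξ (1 / 2)) * (1 - b * θ) ≤ log (ξ (1 / 2)) * (1 - θ) := by
          gcongr
          · exact log_nonneg hξ
          · nlinarith
      _ ≤ log c₀ + σ * (log (2 * b / (b - 1)) + log b * θ / (1 - θ)) := by
          rw [le_div_iff₀ (by linarith)] at hG
          linear_combination hG
      _ ≤ log c₀ + σ * (2 * b / (b - 1)) := by
          gcongr
          rwa [le_div_iff₀ hb1, mul_comm]
  calc ξ (1 / 2) = exp (log (ξ (1 / 2))) := (exp_log (by linarith)).symm
    _ ≤ exp ((log c₀ + σ * (2 * b / (b - 1))) / (1 - b * θ)) := exp_le_exp.2 key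
    _ = _ := by
        rw [← exp_mul, rpow_def_of_pos hc₀, ← exp_add]
        congr 1
        field_simp
        ring
end

section
/- Let ξ : [1/2,1] → ℝ satisfy ξ(t) ≥ ξ(1/2) ≥ 1 for all t, and suppose ln ξ(k) ≤ ln c₀ + σ ln(1/(h−k)) + θ ln ξ(h) for all 1/2 ≤ k < h ≤ 1, with c₀ ≥ 1, σ > 0, 0 < θ < 1. Let 1 < b ≤ 2 with 1 − bθ > 0. Then ∫_{(1/2)^{1/b}}^{1} (ln ξ(t^b))/t dt ≤ θ ∫_{(1/2)^{1/b}}^{1} (ln ξ(t))/t dt + (b^{−1} ln c₀ + 2σ) ln 2 + (σ/(b−1)) ∫_{1/2}^{1} (−ln s) ds. -/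
open MeasureTheory Set Real

lemma aux_log_integrableOn {y : ℝ} (hy0 : 0 < y) (hy1 : y ≤ 1) :
    IntegrableOn Real.log (Set.Ioo 0 y) volume := by
  have hg : IntegrableOn (fun w : ℝ => w ^ (-(1/2) : ℝ)) (Set.Ioo 0 y) volume :=
    (intervalIntegral.integrableOn_Ioo_rpow_iff hy0).mpr (by norm_num)
  have hg2 : IntegrableOn (fun w : ℝ => 2 * w ^ (-(1/2) : ℝ)) (Set.Ioo 0 y) volume :=
    hg.const_mul 2
  refine hg2.mono' Real.measurable_log.aestronglyMeasurable ?_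
  rw [MeasureTheory.ae_restrict_iff' measurableSet_Ioo]
  refine MeasureTheory.ae_of_all _ (fun w hw => ?_)
  have hw0 : 0 < w := hw.1
  have hw1 : w < 1 := lt_of_lt_of_le hw.2 hy1
  have hlw : Real.log w < 0 := Real.log_neg hw0 hw1
  rw [Real.norm_eq_abs, abs_of_nonpos hlw.le]
  have hsq : Real.sqrt (1/w) = w ^ (-(1/2) : ℝ) := by
    rw [Real.sqrt_eq_rpow, one_div, ← Real.rpow_neg_one w, ← Real.rpow_mul hw0.le]
    norm_num
  have h1 : Real.log (Real.sqrt (1/w)) = Real.log (1/w) / 2 := Real.log_sqrt (by positivity)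
  have h2 : Real.log (Real.sqrt (1/w)) ≤ Real.sqrt (1/w) - 1 :=
    Real.log_le_sub_one_of_pos (Real.sqrt_pos.mpr (by positivity))
  have h4 : Real.log (1/w) = -Real.log w := by rw [one_div, Real.log_inv]
  rw [hsq] at h1 h2
  linarith

lemma aux_integral_log {y : ℝ} (hy0 : 0 < y) (hy1 : y ≤ 1) :
    IntervalIntegrable Real.log volume 0 y ∧
      ∫ w in (0:ℝ)..y, Real.log w = y * Real.log y - y := by
  have hii : IntervalIntegrable Real.log volume 0 y := by
    rw [intervalIntegrable_iff_integrableOn_Ioc_of_le hy0.le,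
      integrableOn_Ioc_iff_integrableOn_Ioo]
    exact aux_log_integrableOn hy0 hy1
  refine ⟨hii, ?_⟩
  have hcont : ContinuousOn (fun w : ℝ => w * Real.log w - w) (Set.Icc 0 y) :=
    (Real.continuous_mul_log.sub continuous_id).continuousOn
  have hderiv : ∀ w ∈ Set.Ioo (0:ℝ) y,
      HasDerivWithinAt (fun w : ℝ => w * Real.log w - w) (Real.log w) (Set.Ioi w) w := by
    intro w hw
    have h := (Real.hasDerivAt_mul_log hw.1.ne').sub (hasDerivAt_id w)
    have heq : Real.log w + 1 - 1 = Real.log w := by ring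
    rw [heq] at h
    exact h.hasDerivWithinAt
  have := intervalIntegral.integral_eq_sub_of_hasDeriv_right_of_le hy0.le hcont hderiv hii
  rw [this]
  simp

lemma key_numeric (b : ℝ) (hb1 : 1 < b) (hb2 : b ≤ 2) :
    Real.log 2 ^ 2 / (2 * b) + Real.log 2 / b * (-Real.log (b - 1))
      + Real.log 2 / b * (1 - Real.log (Real.log 2) + Real.log b)
      ≤ 2 * Real.log 2 + 1 / (b - 1) * (1 / 2 - Real.log 2 / 2) := by
  set L := Real.log 2 with hL
  set x := b - 1 with hx
  have hx0 : 0 < x := by rw [hx]; linarith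
  have hx1 : x ≤ 1 := by rw [hx]; linarith
  have hb0 : (0:ℝ) < b := by linarith
  have hL1 : 0.6931471803 < L := Real.log_two_gt_d9
  have hL2 : L < 0.6931471808 := Real.log_two_lt_d9
  have hL0 : 0 < L := by linarith
  have hlx : -Real.log x ≤ 2*L - 3/4 + 1/(5*x) := by
    have h6 : Real.log (1/(5*x)) ≤ 1/(5*x) - 1 := Real.log_le_sub_one_of_pos (by positivity)
    rw [one_div, Real.log_inv] at h6
    have h7 : Real.log (5*x) = Real.log 5 + Real.log x := Real.log_mul (by norm_num) hx0.ne'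
    have h8 : Real.log 5 ≤ 2*L + 1/4 := by
      have h11 : Real.log 5 = Real.log 4 + Real.log (5/4) := by
        rw [← Real.log_mul (by norm_num) (by norm_num)]; norm_num
      have h9 : Real.log (5/4) ≤ 5/4 - 1 := Real.log_le_sub_one_of_pos (by norm_num)
      have h10 : Real.log 4 = 2 * L := by
        rw [hL, (by norm_num : (4:ℝ) = 2^2), Real.log_pow]; push_cast; ring
      linarith
    have hinv : (5*x)⁻¹ = 1/(5*x) := by rw [one_div]
    rw [hinv] at h6
    linarith
  have hlL : -Real.log L ≤ 1/L - 1 := by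
    have h := Real.log_le_sub_one_of_pos (show (0:ℝ) < 1/L by positivity)
    rw [one_div, Real.log_inv] at h
    have : L⁻¹ = 1/L := by rw [one_div]
    linarith [h]
  have hlb : Real.log b ≤ x := by
    have := Real.log_le_sub_one_of_pos hb0; rw [hx]; linarith
  have hLb : (0:ℝ) ≤ L/b := by positivity
  have step : L^2/(2*b) + L/b * (-Real.log x) + L/b * (1 - Real.log L + Real.log b)
      ≤ L^2/(2*b) + L/b * (2*L - 3/4 + 1/(5*x)) + L/b * (1 + (1/L - 1) + x) :=
    add_le_add (add_le_add le_rfl (mul_le_mul_of_nonneg_left hlx hLb))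
      (mul_le_mul_of_nonneg_left (by linarith) hLb)
  refine le_trans step ?_
  rw [← sub_nonneg]
  have hbne : b ≠ 0 := ne_of_gt hb0
  have hxne : x ≠ 0 := ne_of_gt hx0
  have hLne : L ≠ 0 := ne_of_gt hL0
  have hden : (0:ℝ) < 20 * x * b := by positivity
  have hid : 2*L + 1/x*(1/2 - L/2)
        - (L^2/(2*b) + L/b*(2*L - 3/4 + 1/(5*x)) + L/b*(1 + (1/L - 1) + x))
      = ((40*L*x*b + 10*(1-L)*b)
          - (10*L^2*x + 20*L*x*(2*L-3/4) + 4*L + 20*x*(L*x + 1))) / (20*x*b) := by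
    field_simp
    ring
  rw [hid]
  apply div_nonneg _ hden.le
  have hbx : b = x + 1 := by rw [hx]; ring
  rw [hbx]
  nlinarith [sq_nonneg (10*x - 1), mul_nonneg (mul_nonneg (sub_nonneg.mpr hL2.le) hL0.le) hx0.le,
    mul_nonneg (sub_nonneg.mpr hL1.le) hx0.le, mul_nonneg hx0.le hx0.le,
    mul_nonneg (mul_nonneg (sub_nonneg.mpr hL1.le) hx0.le) hx0.le, hx0.le, hL1, hL2]

set_option maxHeartbeats 1600000 in
/-- The key integral inequality in the proof of the iteration lemma. -/
theorem iteration_integral_inequality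
    (ξ : ℝ → ℝ) (c₀ σ θ b : ℝ)
    (hc₀ : 1 ≤ c₀) (hσ : 0 < σ) (hθ0 : 0 < θ) (hθ1 : θ < 1)
    (hb1 : 1 < b) (hb2 : b ≤ 2) (hbθ : 0 < 1 - b * θ)
    (hmono : ∀ t : ℝ, 1/2 ≤ t → t ≤ 1 → ξ (1/2) ≤ ξ t)
    (hξ1 : 1 ≤ ξ (1/2))
    (hiter : ∀ k h : ℝ, 1/2 ≤ k → k < h → h ≤ 1 →
      Real.log (ξ k) ≤ Real.log c₀ + σ * Real.log (1 / (h - k)) + θ * Real.log (ξ h)) :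
    (∫ t in ((1/2 : ℝ) ^ (1/b))..1, Real.log (ξ (t ^ b)) / t) ≤
      θ * (∫ t in ((1/2 : ℝ) ^ (1/b))..1, Real.log (ξ t) / t)
      + (b⁻¹ * Real.log c₀ + 2 * σ) * Real.log 2
      + (σ / (b - 1)) * (∫ s in (1/2 : ℝ)..1, -Real.log s) := by
  have hb0 : (0:ℝ) < b := by linarith
  have hbne : b ≠ 0 := ne_of_gt hb0
  have hinvb0 : 0 < 1/b := by positivity
  have hinvb1 : 1/b < 1 := by rw [div_lt_one hb0]; linarith
  set a : ℝ := (1/2 : ℝ) ^ (1/b) with haDef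
  have ha_half : 1/2 < a := by
    have := Real.rpow_lt_rpow_of_exponent_gt (x := 1/2) (by norm_num) (by norm_num) hinvb1
    rwa [Real.rpow_one] at this
  have ha0 : 0 < a := lt_trans (by norm_num) ha_half
  have ha1 : a < 1 := Real.rpow_lt_one (by norm_num) (by norm_num) hinvb0
  have hab : a ^ b = 1/2 := by
    rw [haDef, ← Real.rpow_mul (by norm_num), one_div_mul_cancel hbne, Real.rpow_one]
  -- the J integral
  have hJ : (∫ s in (1/2 : ℝ)..1, -Real.log s) = 1/2 - Real.log 2 / 2 := by
    rw [intervalIntegral.integral_neg, integral_log]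
    rw [Real.log_one, (by norm_num : (1/2 : ℝ) = 2⁻¹), Real.log_inv]
    ring
  rw [hJ]
  -- nonnegativity of the θ integral
  have hθint : 0 ≤ ∫ t in a..1, Real.log (ξ t) / t := by
    apply intervalIntegral.integral_nonneg ha1.le
    intro u hu
    have hu0 : 0 < u := lt_of_lt_of_le ha0 hu.1
    have h1 : 1 ≤ ξ u := le_trans hξ1 (hmono u (le_trans ha_half.le hu.1) hu.2)
    exact div_nonneg (Real.log_nonneg h1) hu0.le
  by_cases hInt : IntervalIntegrable (fun t => Real.log (ξ (t ^ b)) / t) volume a 1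
  case neg =>
    rw [intervalIntegral.integral_undef hInt]
    have h2 : 0 ≤ (b⁻¹ * Real.log c₀ + 2 * σ) * Real.log 2 := by
      have h5 : (0:ℝ) ≤ Real.log c₀ := Real.log_nonneg hc₀
      have hl2 : (0:ℝ) ≤ Real.log 2 := Real.log_nonneg (by norm_num)
      positivity
    have h3 : 0 ≤ (σ / (b-1)) * (1/2 - Real.log 2/2) := by
      have hl2 : Real.log 2 < 0.6931471808 := Real.log_two_lt_d9
      have h6 : (0:ℝ) < b - 1 := by linarith
      have h7 : (0:ℝ) ≤ 1/2 - Real.log 2/2 := by linarith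
      positivity
    have h4 : 0 ≤ θ * ∫ t in a..1, Real.log (ξ t) / t := mul_nonneg hθ0.le hθint
    linarith
  case pos =>
    have ht0' : ∀ t ∈ Set.Ioo a 1, (0:ℝ) < t := fun t ht => lt_trans ha0 ht.1
    set y : ℝ := Real.log 2 / b with hy
    have hL1 : 0.6931471803 < Real.log 2 := Real.log_two_gt_d9
    have hL2 : Real.log 2 < 0.6931471808 := Real.log_two_lt_d9
    have hL0 : (0:ℝ) < Real.log 2 := by linarith
    have hy0 : 0 < y := by rw [hy]; positivity
    have hy1 : y ≤ 1 := by
      rw [hy, div_le_one hb0]; linarith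
    have hloga : Real.log a = -y := by
      rw [haDef, Real.log_rpow (by norm_num : (0:ℝ) < 1/2),
        (by norm_num : (1/2 : ℝ) = 2⁻¹), Real.log_inv, hy]
      ring
    -- change of variables: φ(t) = t^b
    have hφderiv : ∀ t ∈ Set.Ioo a 1,
        HasDerivWithinAt (fun t : ℝ => t ^ b) (b * t ^ (b-1)) (Set.Ioo a 1) t := by
      intro t ht
      exact (Real.hasDerivAt_rpow_const (Or.inl (ne_of_gt (ht0' t ht)))).hasDerivWithinAt
    have hφinj : Set.InjOn (fun t : ℝ => t ^ b) (Set.Ioo a 1) := by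
      intro u hu v hv huv
      by_contra hne
      rcases lt_or_gt_of_ne hne with h | h
      · exact absurd huv (ne_of_lt (Real.rpow_lt_rpow (ht0' u hu).le h hb0))
      · exact absurd huv.symm (ne_of_lt (Real.rpow_lt_rpow (ht0' v hv).le h hb0))
    have hφimg : (fun t : ℝ => t ^ b) '' (Set.Ioo a 1) = Set.Ioo (1/2) 1 := by
      ext s
      constructor
      · rintro ⟨t, ⟨hta, ht1⟩, rfl⟩
        have ht0 : (0:ℝ) < t := lt_trans ha0 hta
        constructor
        · calc (1/2:ℝ) = a ^ b := hab.symm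
            _ < t ^ b := Real.rpow_lt_rpow ha0.le hta hb0
        · calc t ^ b < 1 ^ b := Real.rpow_lt_rpow ht0.le ht1 hb0
            _ = 1 := Real.one_rpow b
      · rintro ⟨hs2, hs1⟩
        have hs0 : (0:ℝ) < s := lt_trans (by norm_num) hs2
        refine ⟨s ^ (1/b), ⟨?_, ?_⟩, ?_⟩
        · rw [haDef]
          exact Real.rpow_lt_rpow (by norm_num) hs2 hinvb0
        · exact Real.rpow_lt_one hs0.le hs1 hinvb0
        · show (s ^ (1/b)) ^ b = s
          rw [← Real.rpow_mul hs0.le, one_div_mul_cancel hbne, Real.rpow_one]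
    -- integrability of log ∘ ξ over (a,1), deduced from hInt via change of variables
    have hGdiv : IntegrableOn (fun t => Real.log (ξ t) / t) (Set.Ioo a 1) volume := by
      have h1 : IntegrableOn (fun t => Real.log (ξ (t ^ b)) / t) (Set.Ioo a 1) volume :=
        ((intervalIntegrable_iff_integrableOn_Ioc_of_le ha1.le).mp hInt).mono_set
          Set.Ioo_subset_Ioc_self
      have hcont : ContinuousOn (fun t : ℝ => b * t ^ b) (Set.Ioo a 1) := by
        apply ContinuousOn.mul continuousOn_const
        exact fun t ht =>
          (Real.continuousAt_rpow_const t b (Or.inl (ht0' t ht).ne')).continuousWithinAt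
      have h2 : IntegrableOn (fun t => (b * t ^ b) * (Real.log (ξ (t ^ b)) / t))
          (Set.Ioo a 1) volume := by
        apply MeasureTheory.Integrable.bdd_mul h1 (hcont.aestronglyMeasurable measurableSet_Ioo) (c := b)
        rw [MeasureTheory.ae_restrict_iff' measurableSet_Ioo]
        refine MeasureTheory.ae_of_all _ (fun t ht => ?_)
        have ht0 := ht0' t ht
        have htb1 : t ^ b ≤ 1 := (Real.rpow_le_one ht0.le ht.2.le hb0.le)
        have htb0 : 0 < t ^ b := Real.rpow_pos_of_pos ht0 b
        rw [Real.norm_eq_abs, abs_of_nonneg (by positivity)]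
        nlinarith
      have h3 : IntegrableOn (fun t => |b * t ^ (b-1)| • Real.log (ξ (t ^ b)))
          (Set.Ioo a 1) volume := by
        apply h2.congr_fun _ measurableSet_Ioo
        intro t ht
        have ht0 := ht0' t ht
        have htb0 : 0 < t ^ (b-1) := Real.rpow_pos_of_pos ht0 _
        show b * t ^ b * (Real.log (ξ (t^b)) / t) = |b * t^(b-1)| • Real.log (ξ (t^b))
        rw [smul_eq_mul, abs_of_nonneg (by positivity), Real.rpow_sub ht0, Real.rpow_one]
        field_simp
      have h4 : IntegrableOn (fun s => Real.log (ξ s)) (Set.Ioo (1/2:ℝ) 1) volume := by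
        rw [← hφimg]
        exact (integrableOn_image_iff_integrableOn_abs_deriv_smul measurableSet_Ioo hφderiv hφinj
          (fun s => Real.log (ξ s))).mpr h3
      have h5 : IntegrableOn (fun s => Real.log (ξ s)) (Set.Ioo a 1) volume :=
        h4.mono_set (Set.Ioo_subset_Ioo ha_half.le le_rfl)
      have h6 : IntegrableOn (fun t => (1/t) * Real.log (ξ t)) (Set.Ioo a 1) volume := by
        apply MeasureTheory.Integrable.bdd_mul h5 (c := 2)
        · apply ContinuousOn.aestronglyMeasurable _ measurableSet_Ioo
          exact ContinuousOn.div continuousOn_const continuousOn_id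
            (fun t ht => (ht0' t ht).ne')
        · rw [MeasureTheory.ae_restrict_iff' measurableSet_Ioo]
          refine MeasureTheory.ae_of_all _ (fun t ht => ?_)
          have ht0 := ht0' t ht
          rw [Real.norm_eq_abs, abs_of_nonneg (by positivity)]
          rw [div_le_iff₀ ht0]
          nlinarith [ht.1, ha_half]
      apply h6.congr_fun _ measurableSet_Ioo
      intro t ht
      show 1/t * Real.log (ξ t) = Real.log (ξ t) / t
      ring
    have hGii : IntervalIntegrable (fun t => Real.log (ξ t) / t) volume a 1 := by
      rw [intervalIntegrable_iff_integrableOn_Ioc_of_le ha1.le,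
        integrableOn_Ioc_iff_integrableOn_Ioo]
      exact hGdiv
    -- the I3 integral via the substitution w = -log t
    have hmderiv : ∀ t ∈ Set.Ioo a 1,
        HasDerivWithinAt (fun t : ℝ => -Real.log t) (-t⁻¹) (Set.Ioo a 1) t := by
      intro t ht
      exact ((Real.hasDerivAt_log (ht0' t ht).ne').neg).hasDerivWithinAt
    have hminj : Set.InjOn (fun t : ℝ => -Real.log t) (Set.Ioo a 1) := by
      intro u hu v hv huv
      have h : Real.log u = Real.log v := by
        have := congrArg Neg.neg huv; simpa using this
      rw [← Real.exp_log (ht0' u hu), ← Real.exp_log (ht0' v hv), h]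
    have hmimg : (fun t : ℝ => -Real.log t) '' (Set.Ioo a 1) = Set.Ioo 0 y := by
      ext w
      constructor
      · rintro ⟨t, ⟨hta, ht1⟩, rfl⟩
        have ht0 : (0:ℝ) < t := lt_trans ha0 hta
        constructor
        · simp only [neg_pos]
          exact Real.log_neg ht0 ht1
        · have h2 : Real.log a < Real.log t := Real.log_lt_log ha0 hta
          rw [hloga] at h2
          show -Real.log t < y
          linarith
      · rintro ⟨hw0, hwy⟩
        refine ⟨Real.exp (-w), ⟨?_, ?_⟩,
          by show -Real.log (Real.exp (-w)) = w; rw [Real.log_exp]; ring⟩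
        · calc a = Real.exp (Real.log a) := (Real.exp_log ha0).symm
            _ < Real.exp (-w) := by
              rw [hloga]
              exact Real.exp_lt_exp.mpr (by linarith)
        · calc Real.exp (-w) < Real.exp 0 := Real.exp_lt_exp.mpr (by linarith)
            _ = 1 := Real.exp_zero
    have heqon : ∀ t ∈ Set.Ioo a 1,
        |(-t⁻¹)| • ((fun w => -Real.log w) ((fun t : ℝ => -Real.log t) t))
          = -Real.log (-Real.log t) / t := by
      intro t ht
      have ht0 := ht0' t ht
      rw [abs_neg, abs_of_nonneg (by positivity), smul_eq_mul]
      ring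
    have hI3ii : IntervalIntegrable (fun t => -Real.log (-Real.log t) / t) volume a 1 := by
      rw [intervalIntegrable_iff_integrableOn_Ioc_of_le ha1.le,
        integrableOn_Ioc_iff_integrableOn_Ioo]
      have h1 : IntegrableOn (fun w : ℝ => -Real.log w) (Set.Ioo 0 y) volume :=
        (aux_log_integrableOn hy0 hy1).neg
      rw [← hmimg] at h1
      have h2 := (integrableOn_image_iff_integrableOn_abs_deriv_smul measurableSet_Ioo
        hmderiv hminj (fun w => -Real.log w)).mp h1
      exact h2.congr_fun heqon measurableSet_Ioo
    have hI3val : (∫ t in a..1, -Real.log (-Real.log t) / t) = y - y * Real.log y := by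
      have h2 : (∫ w in Set.Ioo 0 y, -Real.log w)
          = ∫ t in Set.Ioo a 1, -Real.log (-Real.log t) / t := by
        rw [← hmimg, integral_image_eq_integral_abs_deriv_smul measurableSet_Ioo hmderiv hminj]
        exact MeasureTheory.setIntegral_congr_fun measurableSet_Ioo (fun t ht => heqon t ht)
      rw [intervalIntegral.integral_of_le ha1.le, MeasureTheory.integral_Ioc_eq_integral_Ioo, ← h2]
      rw [← MeasureTheory.integral_Ioc_eq_integral_Ioo,
        ← intervalIntegral.integral_of_le hy0.le]
      rw [intervalIntegral.integral_neg, (aux_integral_log hy0 hy1).2]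
      ring
    -- continuity facts on [a,1]
    have hpos' : ∀ t ∈ Set.uIcc a (1:ℝ), (0:ℝ) < t := by
      intro t ht
      rw [Set.uIcc_of_le ha1.le] at ht
      exact lt_of_lt_of_le ha0 ht.1
    have cInv : ContinuousOn (fun t : ℝ => 1/t) (Set.uIcc a 1) :=
      ContinuousOn.div continuousOn_const continuousOn_id (fun t ht => (hpos' t ht).ne')
    have cLog : ContinuousOn (fun t : ℝ => -Real.log t / t) (Set.uIcc a 1) := by
      apply ContinuousOn.div _ continuousOn_id (fun t ht => (hpos' t ht).ne')
      exact (Real.continuousOn_log.mono (fun t ht => (hpos' t ht).ne')).neg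
    -- integral values
    have h0notin : (0:ℝ) ∉ Set.uIcc a 1 := by
      intro h
      exact absurd (hpos' 0 h) (lt_irrefl 0)
    have hIa : (∫ t in a..1, 1/t) = y := by
      rw [integral_one_div h0notin, one_div, Real.log_inv, hloga, neg_neg]
    have hIbval : (∫ t in a..1, -Real.log t / t) = y^2/2 := by
      have hF : ∀ t ∈ Set.uIcc a (1:ℝ),
          HasDerivAt (fun u : ℝ => -(Real.log u)^2/2) (-Real.log t / t) t := by
        intro t ht
        have ht0 := hpos' t ht
        have h := ((Real.hasDerivAt_log ht0.ne').fun_pow 2).fun_neg.div_const 2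
        refine h.congr_deriv ?_
        norm_num
        ring
      rw [intervalIntegral.integral_eq_sub_of_hasDerivAt hF cLog.intervalIntegrable]
      rw [Real.log_one, hloga]
      ring
    -- pointwise comparison
    have hpt : ∀ t ∈ Set.Ioo a 1, Real.log (ξ (t ^ b)) / t ≤
        Real.log c₀ * (1/t)
          + σ * (b * (-Real.log t / t) + (-Real.log (b-1)) * (1/t)
              + -Real.log (-Real.log t) / t)
          + θ * (Real.log (ξ t) / t) := by
      rintro t ⟨hta, ht1⟩
      have ht0 : (0:ℝ) < t := lt_trans ha0 hta
      have htl0 : Real.log t < 0 := Real.log_neg ht0 ht1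
      have hnl0 : 0 < -Real.log t := by linarith
      have htb_half : 1/2 < t ^ b := by
        calc (1/2:ℝ) = a ^ b := hab.symm
          _ < t ^ b := Real.rpow_lt_rpow ha0.le hta hb0
      have htb_t : t ^ b < t := by
        have := Real.rpow_lt_rpow_of_exponent_gt ht0 ht1 hb1
        rwa [Real.rpow_one] at this
      have hiter' := hiter (t ^ b) t htb_half.le htb_t ht1.le
      have htbpos : 0 < t ^ b := Real.rpow_pos_of_pos ht0 b
      have hprod_pos : 0 < (b-1) * (-Real.log t) * t ^ b := by
        have hb1' : 0 < b - 1 := by linarith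
        positivity
      have hEXP : (b-1) * (-Real.log t) * t ^ b ≤ t - t ^ b := by
        have h1 : (1-b) * Real.log t + 1 ≤ t ^ (1-b) := by
          rw [Real.rpow_def_of_pos ht0]
          have := Real.add_one_le_exp (Real.log t * (1-b))
          calc (1-b) * Real.log t + 1 = Real.log t * (1-b) + 1 := by ring
            _ ≤ Real.exp (Real.log t * (1-b)) := this
        have h2 : ((1-b) * Real.log t) * t ^ b ≤ (t ^ (1-b) - 1) * t ^ b :=
          mul_le_mul_of_nonneg_right (by linarith) htbpos.le
        have h3 : (t ^ (1-b) - 1) * t ^ b = t - t ^ b := by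
          rw [sub_mul, one_mul, ← Real.rpow_add ht0]
          norm_num
        calc (b-1) * (-Real.log t) * t ^ b = ((1-b) * Real.log t) * t ^ b := by ring
          _ ≤ (t ^ (1-b) - 1) * t ^ b := h2
          _ = t - t ^ b := h3
      have hlog_bound : Real.log (1/(t - t ^ b)) ≤
          b * (-Real.log t) + (-Real.log (b-1)) + (-Real.log (-Real.log t)) := by
        rw [one_div, Real.log_inv]
        have h4 : Real.log ((b-1) * (-Real.log t) * t ^ b) ≤ Real.log (t - t ^ b) :=
          Real.log_le_log hprod_pos hEXP
        have h5 : Real.log ((b-1) * (-Real.log t) * t ^ b)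
            = Real.log (b-1) + Real.log (-Real.log t) + b * Real.log t := by
          rw [Real.log_mul (by nlinarith : (b-1) * (-Real.log t) ≠ 0) htbpos.ne',
            Real.log_mul (by linarith : b - 1 ≠ 0) hnl0.ne', Real.log_rpow ht0]
        rw [h5] at h4
        linarith
      have hnum : Real.log (ξ (t ^ b)) ≤ Real.log c₀
          + σ * (b * (-Real.log t) + (-Real.log (b-1)) + (-Real.log (-Real.log t)))
          + θ * Real.log (ξ t) := by
        have := mul_le_mul_of_nonneg_left hlog_bound hσ.le
        linarith
      calc Real.log (ξ (t ^ b)) / t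
          ≤ (Real.log c₀
              + σ * (b * (-Real.log t) + (-Real.log (b-1)) + (-Real.log (-Real.log t)))
              + θ * Real.log (ξ t)) / t := by
            apply div_le_div_of_nonneg_right hnum ht0.le
        _ = _ := by ring
    -- interval integrability of the comparison function
    have hiF1 : IntervalIntegrable (fun t : ℝ => Real.log c₀ * (1/t)) volume a 1 :=
      (continuousOn_const.mul cInv).intervalIntegrable
    have hig1 : IntervalIntegrable (fun t : ℝ => b * (-Real.log t / t)) volume a 1 :=
      (continuousOn_const.mul cLog).intervalIntegrable
    have hig2 : IntervalIntegrable (fun t : ℝ => (-Real.log (b-1)) * (1/t)) volume a 1 :=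
      (continuousOn_const.mul cInv).intervalIntegrable
    have hiF2 : IntervalIntegrable (fun t : ℝ =>
        σ * (b * (-Real.log t / t) + (-Real.log (b-1)) * (1/t)
          + -Real.log (-Real.log t) / t)) volume a 1 :=
      (((hig1.add hig2).add hI3ii)).const_mul σ
    have hiF3 : IntervalIntegrable (fun t : ℝ => θ * (Real.log (ξ t) / t)) volume a 1 :=
      hGii.const_mul θ
    have hiD : IntervalIntegrable (fun t : ℝ =>
        Real.log c₀ * (1/t)
          + σ * (b * (-Real.log t / t) + (-Real.log (b-1)) * (1/t)
              + -Real.log (-Real.log t) / t)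
          + θ * (Real.log (ξ t) / t)) volume a 1 :=
      (hiF1.add hiF2).add hiF3
    -- the comparison of integrals
    have hmain : (∫ t in a..1, Real.log (ξ (t ^ b)) / t)
        ≤ ∫ t in a..1, (Real.log c₀ * (1/t)
            + σ * (b * (-Real.log t / t) + (-Real.log (b-1)) * (1/t)
                + -Real.log (-Real.log t) / t)
            + θ * (Real.log (ξ t) / t)) := by
      apply intervalIntegral.integral_mono_ae_restrict ha1.le hInt hiD
      have hres : volume.restrict (Set.Icc a (1:ℝ)) = volume.restrict (Set.Ioo a 1) :=
        Measure.restrict_congr_set Ioo_ae_eq_Icc.symm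
      rw [Filter.EventuallyLE, hres, MeasureTheory.ae_restrict_iff' measurableSet_Ioo]
      exact MeasureTheory.ae_of_all _ hpt
    -- computing the comparison integral
    have hsplit : (∫ t in a..1, (Real.log c₀ * (1/t)
            + σ * (b * (-Real.log t / t) + (-Real.log (b-1)) * (1/t)
                + -Real.log (-Real.log t) / t)
            + θ * (Real.log (ξ t) / t)))
        = Real.log c₀ * y
          + σ * (b * (y^2/2) + (-Real.log (b-1)) * y + (y - y * Real.log y))
          + θ * (∫ t in a..1, Real.log (ξ t) / t) := by
      rw [intervalIntegral.integral_add (hiF1.add hiF2) hiF3,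
        intervalIntegral.integral_add hiF1 hiF2]
      rw [intervalIntegral.integral_const_mul, intervalIntegral.integral_const_mul,
        intervalIntegral.integral_const_mul, hIa]
      rw [intervalIntegral.integral_add (hig1.add hig2) hI3ii,
        intervalIntegral.integral_add hig1 hig2]
      rw [intervalIntegral.integral_const_mul, intervalIntegral.integral_const_mul,
        hIa, hIbval, hI3val]
    have hylog : Real.log y = Real.log (Real.log 2) - Real.log b := by
      rw [hy, Real.log_div hL0.ne' hbne]
    have hXeq : b * (y^2/2) + (-Real.log (b-1)) * y + (y - y * Real.log y)
        = Real.log 2^2/(2*b) + Real.log 2/b * (-Real.log (b-1))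
          + Real.log 2/b * (1 - Real.log (Real.log 2) + Real.log b) := by
      rw [hy, hylog]
      field_simp
      ring
    have hkey := key_numeric b hb1 hb2
    have hkey' := mul_le_mul_of_nonneg_left hkey hσ.le
    have hcc : Real.log c₀ * y = b⁻¹ * Real.log c₀ * Real.log 2 := by
      rw [hy]; ring
    have he : σ * (2*Real.log 2 + 1/(b-1)*(1/2 - Real.log 2/2))
        = 2*σ*Real.log 2 + (σ/(b-1))*(1/2 - Real.log 2/2) := by ring
    calc (∫ t in a..1, Real.log (ξ (t ^ b)) / t)
        ≤ ∫ t in a..1, (Real.log c₀ * (1/t)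
            + σ * (b * (-Real.log t / t) + (-Real.log (b-1)) * (1/t)
                + -Real.log (-Real.log t) / t)
            + θ * (Real.log (ξ t) / t)) := hmain
      _ = Real.log c₀ * y
          + σ * (b * (y^2/2) + (-Real.log (b-1)) * y + (y - y * Real.log y))
          + θ * (∫ t in a..1, Real.log (ξ t) / t) := hsplit
      _ ≤ θ * (∫ t in a..1, Real.log (ξ t) / t)
          + (b⁻¹ * Real.log c₀ + 2 * σ) * Real.log 2
          + (σ / (b-1)) * (1/2 - Real.log 2/2) := by
        rw [hXeq, hcc]
        nlinarith [hkey', he]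
end
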